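/- Let F be a field of characteristic zero, let K = F(x_1, …, x_N) be the fraction field of R = F[x_1, …, x_N], and let D be the unique derivation on K extending the partial derivative ∂/∂x_1. Let d ∈ R be irreducible with ∂d/∂x_1 ≠ 0, and let r ∈ R be a polynomial not divisible by d. Then for every natural number i there exists a polynomial r_i ∈ R not divisible by d such that D^i(r/d) = r_i/d^{i+1}. (Iterated derivatives increase the pole order at d by exactly one each time.) -/

import Mathlib

/-!
By the quotient rule, `D(s / dⁿ⁺¹) = (d · D s - (n + 1) · s · D d) / dⁿ⁺²`. Since `d` is prime
and `n + 1` is a unit in characteristic zero, the new numerator is prime to `d` as soon as `d ∤ s`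
and `d ∤ ∂d/∂x₁`; the latter holds because `∂d/∂x₁` is nonzero and of smaller degree in `x₁`
than `d`.
-/

open MvPolynomial

namespace MvPolynomial

variable {R σ : Type*}

theorem degreeOf_pderiv_lt [CommSemiring R] (i : σ) {p : MvPolynomial σ R}
    (h : pderiv i p ≠ 0) : degreeOf i (pderiv i p) < degreeOf i p := by
  have h_support : ∀ m ∈ (pderiv i p).support, m i < degreeOf i p := by
    intro m hm
    have hm' : m + Finsupp.single i 1 ∈ p.support := by
      rw [mem_support_iff, coeff_pderiv] at hm
      exact mem_support_iff.mpr (left_ne_zero_of_mul hm)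
    simpa using monomial_le_degreeOf i hm'
  obtain ⟨m, hm⟩ := support_nonempty.mpr h
  exact (degreeOf_lt_iff ((Nat.zero_le _).trans_lt (h_support m hm))).mpr h_support

theorem not_dvd_pderiv [CommSemiring R] [NoZeroDivisors R] (i : σ) {p : MvPolynomial σ R}
    (h : pderiv i p ≠ 0) : ¬ p ∣ pderiv i p := by
  rintro ⟨c, hc⟩
  have hp : p ≠ 0 := by rintro rfl; simp at h
  have hc0 : c ≠ 0 := by rintro rfl; exact h (by rw [hc, mul_zero])
  have hlt := degreeOf_pderiv_lt i h
  rw [hc, degreeOf_mul_eq hp hc0] at hlt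
  omega

end MvPolynomial

section PoleOrder

variable {F R K : Type*} [CommRing F] [CommRing R] [Field K] [Algebra F K] [Algebra R K]

theorem Derivation.apply_algebraMap_div_pow_succ (D : Derivation F K K) {δ : R → R}
    (hD : ∀ p, D (algebraMap R K p) = algebraMap R K (δ p)) (s d : R) (n : ℕ)
    (hd : algebraMap R K d ≠ 0) :
    D (algebraMap R K s / algebraMap R K d ^ (n + 1)) =
      algebraMap R K (d * δ s - (n + 1) * (s * δ d)) / algebraMap R K d ^ (n + 2) := by
  rw [Derivation.leibniz_div, Derivation.leibniz_pow, hD, hD]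
  simp only [map_sub, map_mul, map_add, map_one, smul_eq_mul, nsmul_eq_mul,
    add_tsub_cancel_right]
  field_simp
  push_cast
  ring

theorem Prime.not_dvd_mul_sub_unit_mul {d s t u : R} (a : R) (hd : Prime d) (hu : IsUnit u)
    (hs : ¬ d ∣ s) (ht : ¬ d ∣ t) : ¬ d ∣ d * a - u * (s * t) := by
  rw [dvd_sub_right (dvd_mul_right d a), hu.dvd_mul_left, hd.dvd_mul]
  tauto

theorem Derivation.iterate_algebraMap_div_of_prime [IsFractionRing R K] [Algebra ℚ R]
    (D : Derivation F K K) {δ : R → R}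
    (hD : ∀ p, D (algebraMap R K p) = algebraMap R K (δ p))
    {d : R} (hd : Prime d) (hδd : ¬ d ∣ δ d) {r : R} (hr : ¬ d ∣ r) (i : ℕ) :
    ∃ rᵢ : R, ¬ d ∣ rᵢ ∧
      (⇑D)^[i] (algebraMap R K r / algebraMap R K d) =
        algebraMap R K rᵢ / algebraMap R K d ^ (i + 1) := by
  have hd0 : algebraMap R K d ≠ 0 :=
    (map_ne_zero_iff _ (IsFractionRing.injective R K)).mpr hd.ne_zero
  induction i with
  | zero => exact ⟨r, hr, by simp⟩
  | succ n ih =>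
    obtain ⟨s, hs, hDn⟩ := ih
    have hunit : IsUnit ((n : R) + 1) := by
      simpa using (IsUnit.mk0 ((n : ℚ) + 1) (by positivity)).map (algebraMap ℚ R)
    refine ⟨d * δ s - (n + 1) * (s * δ d), hd.not_dvd_mul_sub_unit_mul _ hunit hs hδd, ?_⟩
    rw [Function.iterate_succ_apply', hDn, D.apply_algebraMap_div_pow_succ hD s d n hd0]

end PoleOrder

theorem iterated_derivative_pole_order
    (F : Type*) [Field F] [CharZero F] (N : ℕ) (x₁ : Fin N)
    (D : Derivation F (FractionRing (MvPolynomial (Fin N) F))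
      (FractionRing (MvPolynomial (Fin N) F)))
    (hD : ∀ p : MvPolynomial (Fin N) F,
      D (algebraMap (MvPolynomial (Fin N) F) (FractionRing (MvPolynomial (Fin N) F)) p)
        = algebraMap (MvPolynomial (Fin N) F) (FractionRing (MvPolynomial (Fin N) F))
            (pderiv x₁ p))
    (d : MvPolynomial (Fin N) F) (hd : Irreducible d) (hd' : pderiv x₁ d ≠ 0)
    (r : MvPolynomial (Fin N) F) (hr : ¬ d ∣ r) :
    ∀ i : ℕ, ∃ rᵢ : MvPolynomial (Fin N) F, ¬ d ∣ rᵢ ∧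
      (⇑D)^[i]
        (algebraMap (MvPolynomial (Fin N) F) (FractionRing (MvPolynomial (Fin N) F)) r /
         algebraMap (MvPolynomial (Fin N) F) (FractionRing (MvPolynomial (Fin N) F)) d)
      = algebraMap (MvPolynomial (Fin N) F) (FractionRing (MvPolynomial (Fin N) F)) rᵢ /
        (algebraMap (MvPolynomial (Fin N) F) (FractionRing (MvPolynomial (Fin N) F)) d)
          ^ (i + 1) :=
  D.iterate_algebraMap_div_of_prime hD (UniqueFactorizationMonoid.irreducible_iff_prime.mp hd)
    (not_dvd_pderiv x₁ hd') hr
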